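/- arXiv:2207.05389 — 6 statements merged into one kernel-verified Lean document; each statement's English description precedes it below -/
import Mathlib

section
/- Given any vector (a, b) ∈ ℂ²ⁿ \ {0}, there exist symmetric n×n complex matrices Z₁, Z₂, Z₃ such that [[I, Z₃], [0, I]] · [[I, 0], [Z₂, I]] · [[I, Z₁], [0, I]] · e₂ₙ = (a, b), where e₂ₙ is the last standard basis vector of ℂ²ⁿ; moreover Z₁ can be chosen with Z₁eₙ ≠ 0. -/
/-! The product maps `(0, e)` to `(Z₁ e + Z₃ (Z₂ Z₁ e + e), Z₂ Z₁ e + e)`, and a symmetric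
matrix can send any nonzero vector to any prescribed vector (a rank-two symmetric matrix built
from a left inverse of the vector). So choose `Z₁ e = x`, `Z₂ x = b - e` and `Z₃ b = a - x`,
where `x = e` if `b ≠ 0`, and `x = a ≠ 0` if `b = 0` (then `Z₃ = 0`). -/

open Matrix

namespace Matrix

variable {ι R : Type*} [Fintype ι]

-- The witness is `w uᵀ + u wᵀ - (w ⬝ᵥ v) u uᵀ`.
theorem exists_isSymm_mulVec_eq_of_dotProduct_eq_one [CommRing R] {u v : ι → R}
    (huv : u ⬝ᵥ v = 1) (w : ι → R) : ∃ Z : Matrix ι ι R, Z.IsSymm ∧ Z *ᵥ v = w := by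
  refine ⟨vecMulVec w u + vecMulVec u w - (w ⬝ᵥ v) • vecMulVec u u, ?_, ?_⟩
  · simp only [IsSymm, transpose_sub, transpose_add, transpose_smul, transpose_vecMulVec,
      add_comm]
  · simp only [sub_mulVec, add_mulVec, smul_mulVec, vecMulVec_mulVec, huv, op_smul_eq_smul,
      one_smul]
    abel

theorem exists_isSymm_mulVec_eq [Field R] [DecidableEq ι] {v : ι → R} (hv : v ≠ 0)
    (w : ι → R) : ∃ Z : Matrix ι ι R, Z.IsSymm ∧ Z *ᵥ v = w := by
  obtain ⟨i, hi⟩ := Function.ne_iff.mp hv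
  refine exists_isSymm_mulVec_eq_of_dotProduct_eq_one (u := Pi.single i (v i)⁻¹) ?_ w
  rw [single_dotProduct, inv_mul_cancel₀ hi]

theorem exists_isSymm_mulVec_eq_iff [Field R] [DecidableEq ι] {v w : ι → R} :
    (∃ Z : Matrix ι ι R, Z.IsSymm ∧ Z *ᵥ v = w) ↔ (v = 0 → w = 0) := by
  refine ⟨?_, fun h => ?_⟩
  · rintro ⟨Z, -, rfl⟩ rfl
    exact mulVec_zero Z
  · by_cases hv : v = 0
    · exact ⟨0, isSymm_zero, by rw [zero_mulVec, h hv]⟩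
    · exact exists_isSymm_mulVec_eq hv w

theorem fromBlocks_unipotent_mul_mulVec {m : Type*} [Fintype m] [DecidableEq ι] [DecidableEq m]
    [Ring R] (Z₁ : Matrix ι m R) (Z₂ : Matrix m ι R) (Z₃ : Matrix ι m R) (e : m → R) :
    (fromBlocks 1 Z₃ 0 1 * fromBlocks 1 0 Z₂ 1 * fromBlocks 1 Z₁ 0 1) *ᵥ Sum.elim 0 e =
      Sum.elim (Z₁ *ᵥ e + Z₃ *ᵥ (Z₂ *ᵥ (Z₁ *ᵥ e) + e)) (Z₂ *ᵥ (Z₁ *ᵥ e) + e) := by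
  simp only [← mulVec_mulVec, fromBlocks_mulVec, Sum.elim_comp_inl, Sum.elim_comp_inr,
    mulVec_zero, zero_mulVec, one_mulVec, zero_add, add_zero]

end Matrix

theorem phi3_surjective (n : ℕ) (a b : Fin (n + 1) → ℂ) (hab : ¬(a = 0 ∧ b = 0)) :
    ∃ Z₁ Z₂ Z₃ : Matrix (Fin (n + 1)) (Fin (n + 1)) ℂ,
      Z₁ᵀ = Z₁ ∧ Z₂ᵀ = Z₂ ∧ Z₃ᵀ = Z₃ ∧
      Z₁.mulVec (Pi.single (Fin.last n) 1) ≠ 0 ∧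
      (fromBlocks 1 Z₃ 0 1 * fromBlocks 1 0 Z₂ 1 * fromBlocks 1 Z₁ 0 1).mulVec
        (Sum.elim 0 (Pi.single (Fin.last n) 1)) = Sum.elim a b := by
  set e : Fin (n + 1) → ℂ := Pi.single (Fin.last n) 1
  have he : e ≠ 0 := Function.ne_iff.mpr ⟨Fin.last n, by simp [e]⟩
  obtain ⟨x, hx, hxa⟩ : ∃ x : Fin (n + 1) → ℂ, x ≠ 0 ∧ (b = 0 → a - x = 0) := by
    by_cases hb : b = 0
    · exact ⟨a, fun ha => hab ⟨ha, hb⟩, fun _ => sub_self a⟩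
    · exact ⟨e, he, fun h => absurd h hb⟩
  obtain ⟨Z₁, hZ₁, hZ₁e⟩ := exists_isSymm_mulVec_eq he x
  obtain ⟨Z₂, hZ₂, hZ₂x⟩ := exists_isSymm_mulVec_eq hx (b - e)
  obtain ⟨Z₃, hZ₃, hZ₃b⟩ := exists_isSymm_mulVec_eq_iff.mpr hxa
  refine ⟨Z₁, Z₂, Z₃, hZ₁, hZ₂, hZ₃, hZ₁e ▸ hx, ?_⟩
  rw [fromBlocks_unipotent_mul_mulVec, hZ₁e, hZ₂x, sub_add_cancel, hZ₃b, add_sub_cancel]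
end

section
/- (Whitehead's lemma, off-diagonal case) For a commutative ring R with identity, i ≠ j, and any a ∈ R, the symplectic matrix K_ij(a) equals the product F_jj(−a) · E_ij(1) · F_jj(a) · E_ii(a) · E_ij(−1). -/
/-!
Both sides are block triangular. Writing `S = e_ij + e_ji`, the first three factors form the
conjugate `F(-C) E(S) F(C)` with `C = a e_jj`; as `S e_jj = e_ij`, `e_jj S = e_ji` and
`e_jj S e_jj = 0`, it equals `[[1 + a e_ij, S], [0, 1 - a e_ji]]`, which already has the
diagonal blocks of `K_ij(a)`. The remaining two factors merge into `E(a e_ii - S)`, which kills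
the upper-right block `S` because `(1 + a e_ij)(a e_ii - S) = -S`.
-/

open Matrix

namespace Matrix

variable {n α : Type*} [Fintype n] [DecidableEq n] [Ring α]

theorem fromBlocks_one_zero_one_mul (B B' : Matrix n n α) :
    (fromBlocks 1 B 0 1 * fromBlocks 1 B' 0 1 : Matrix (n ⊕ n) (n ⊕ n) α) =
      fromBlocks 1 (B + B') 0 1 := by
  simp [fromBlocks_multiply, add_comm]

theorem fromBlocks_mul_fromBlocks_one_zero_one (A B C D T : Matrix n n α) :
    fromBlocks A B C D * fromBlocks 1 T 0 1 = fromBlocks A (A * T + B) C (C * T + D) := by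
  simp [fromBlocks_multiply]

theorem fromBlocks_lower_mul_upper_mul_lower (B C : Matrix n n α) :
    fromBlocks 1 0 (-C) 1 * fromBlocks 1 B 0 1 * fromBlocks 1 0 C 1 =
      fromBlocks (1 + B * C) B (-(C * B * C)) (1 - C * B) := by
  simp only [fromBlocks_multiply, Matrix.one_mul, Matrix.mul_one, Matrix.mul_zero,
    add_zero, zero_add, Matrix.neg_mul, Matrix.add_mul, Matrix.mul_assoc]
  congr 1 <;> abel

end Matrix

theorem whitehead_offdiagonal (R : Type*) [CommRing R] (n : ℕ) (i j : Fin n)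
    (hij : i ≠ j) (a : R) :
    (fromBlocks (1 + Matrix.single i j a) 0 0
        (1 + Matrix.single j i (-a)) : Matrix (Fin n ⊕ Fin n) (Fin n ⊕ Fin n) R) =
      fromBlocks 1 0 (Matrix.single j j (-a)) 1 *
      fromBlocks 1 (Matrix.single i j (1 : R) + Matrix.single j i (1 : R)) 0 1 *
      fromBlocks 1 0 (Matrix.single j j a) 1 *
      fromBlocks 1 (Matrix.single i i a) 0 1 *
      fromBlocks 1 (Matrix.single i j (-1 : R) + Matrix.single j i (-1 : R)) 0 1 := by
  set S : Matrix (Fin n) (Fin n) R := single i j 1 + single j i 1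
  have hS : single i j (-1 : R) + single j i (-1) = -S := by
    simp only [S, neg_add, single_neg]
  rw [← single_neg j j a, hS, Matrix.mul_assoc _ (fromBlocks 1 (single i i a) 0 1),
    fromBlocks_one_zero_one_mul, fromBlocks_lower_mul_upper_mul_lower,
    fromBlocks_mul_fromBlocks_one_zero_one]
  congr 1 <;> simp [S, ← single_neg, Matrix.add_mul, Matrix.mul_add, hij, hij.symm] <;> abel
end

section
/- (Complementary bases theorem) Let M = [[A, B], [C, D]] be a symplectic 2n×2n complex matrix and let k = rank(B). If j₁ < … < j_k are indices such that Be_{j₁}, …, Be_{j_k} form a basis of the column space of B, and i₁ < … < i_{n−k} are the complementary indices in {1, …, n}, then the n×n matrix X with columns Ae_{i₁}, …, Ae_{i_{n−k}}, Be_{j₁}, …, Be_{j_k} is invertible. -/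
/-!
Write a kernel vector of `X` as `u + w`, with `u` supported off `s` and `w` on `s`, so that
`A u + B w = 0`. The lower block row of `MᵀJM = J`, namely `DᵀA - BᵀC = 1` and `DᵀB = BᵀD`, turns
`A u = B (-w)` into `u = Bᵀ y` for some `y`. The coordinates of `Bᵀ y` are the pairings of `y` with
the columns of `B`; they vanish on `s` because `u` does, hence everywhere because the columns
indexed by `s` span all of them. So `u = 0`, then `B w = 0`, and `w = 0` by linear independence.
-/

open Matrix

namespace Matrix

variable {R : Type*} [CommRing R] {m n : Type*}

theorem transpose_mulVec_eq_zero_of_span_eq [Fintype m] {B : Matrix m n R} {s : Finset n}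
    (hspan : Submodule.span R (Set.range fun j : s => Bᵀ (j : n)) =
      Submodule.span R (Set.range Bᵀ))
    {y : m → R} (hy : ∀ j ∈ s, (Bᵀ *ᵥ y) j = 0) :
    Bᵀ *ᵥ y = 0 := by
  have hle : Submodule.span R (Set.range Bᵀ) ≤ LinearMap.ker ((dotProductBilin R R).flip y) := by
    rw [← hspan, Submodule.span_le]
    rintro _ ⟨j, rfl⟩
    exact hy j j.2
  funext j
  exact hle (Submodule.subset_span ⟨j, rfl⟩)

variable [Fintype n] [DecidableEq n]

theorem symplectic_fromBlocks_bottom_row {A B C D : Matrix n n R}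
    (h : (fromBlocks A B C D)ᵀ * fromBlocks 0 1 (-1) 0 * fromBlocks A B C D =
      fromBlocks 0 1 (-1) 0) :
    Dᵀ * A - Bᵀ * C = 1 ∧ Dᵀ * B = Bᵀ * D := by
  rw [fromBlocks_transpose, fromBlocks_multiply, fromBlocks_multiply] at h
  have h₂₁ := congrArg toBlocks₂₁ h
  have h₂₂ := congrArg toBlocks₂₂ h
  simp only [toBlocks_fromBlocks₂₁, toBlocks_fromBlocks₂₂] at h₂₁ h₂₂
  constructor
  · linear_combination (norm := noncomm_ring) -h₂₁
  · linear_combination (norm := noncomm_ring) -h₂₂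

theorem eq_transpose_mulVec_of_mulVec_eq {A B C D : Matrix n n R}
    (hDA : Dᵀ * A - Bᵀ * C = 1) (hDB : Dᵀ * B = Bᵀ * D) {u w : n → R}
    (h : A *ᵥ u = B *ᵥ w) :
    u = Bᵀ *ᵥ (D *ᵥ w - C *ᵥ u) :=
  calc u = (Dᵀ * A - Bᵀ * C) *ᵥ u := by rw [hDA, one_mulVec]
    _ = (Dᵀ * B) *ᵥ w - Bᵀ *ᵥ (C *ᵥ u) := by
        rw [sub_mulVec, ← mulVec_mulVec, h, mulVec_mulVec, mulVec_mulVec]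
    _ = Bᵀ *ᵥ (D *ᵥ w - C *ᵥ u) := by rw [hDB, ← mulVec_mulVec, mulVec_sub]

theorem of_ite_mulVec (A B : Matrix m n R) (s : Finset n) (v : n → R) :
    of (fun i j => if j ∈ s then B i j else A i j) *ᵥ v =
      A *ᵥ (fun j => if j ∈ s then 0 else v j) + B *ᵥ (fun j => if j ∈ s then v j else 0) := by
  funext i
  simp only [Pi.add_apply, mulVec, dotProduct, of_apply, mul_ite, mul_zero,
    ← Finset.sum_add_distrib]
  refine Finset.sum_congr rfl fun j _ => ?_
  split_ifs <;> simp

theorem eq_zero_of_mulVec_ite_eq_zero {B : Matrix m n R} {s : Finset n}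
    (hindep : LinearIndependent R fun j : s => Bᵀ (j : n)) {v : n → R}
    (h : B *ᵥ (fun j => if j ∈ s then v j else 0) = 0) :
    ∀ j ∈ s, v j = 0 := by
  have hsub : B.submatrix id (↑) *ᵥ (fun j : s => v j) = 0 := by
    rw [← h]
    funext i
    simp only [mulVec, dotProduct, submatrix_apply, id, mul_ite, mul_zero,
      Finset.sum_ite_mem, Finset.univ_inter]
    exact Finset.sum_coe_sort s fun j => B i j * v j
  have hinj := mulVec_injective_iff.mpr hindep
  intro j hj
  exact congrFun (hinj (hsub.trans (mulVec_zero _).symm)) ⟨j, hj⟩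

end Matrix

theorem complementary_bases_general (n : ℕ) (A B C D : Matrix (Fin n) (Fin n) ℂ)
    (hsymp : (fromBlocks A B C D)ᵀ * (fromBlocks 0 1 (-1) 0) * (fromBlocks A B C D) =
      (fromBlocks (0 : Matrix (Fin n) (Fin n) ℂ) 1 (-1) 0))
    (s : Finset (Fin n))
    (hindep : LinearIndependent ℂ (fun j : s => Bᵀ (j : Fin n)))
    (hspan : Submodule.span ℂ (Set.range fun j : s => Bᵀ (j : Fin n)) =
      Submodule.span ℂ (Set.range fun j : Fin n => Bᵀ j)) :
    IsUnit (Matrix.of fun i j : Fin n => if j ∈ s then B i j else A i j).det := by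
  obtain ⟨hDA, hDB⟩ := symplectic_fromBlocks_bottom_row hsymp
  rw [isUnit_iff_ne_zero, Ne, ← exists_mulVec_eq_zero_iff]
  rintro ⟨v, hv0, hv⟩
  set u : Fin n → ℂ := fun j => if j ∈ s then 0 else v j
  set w : Fin n → ℂ := fun j => if j ∈ s then v j else 0
  have hsplit : A *ᵥ u + B *ᵥ w = 0 := of_ite_mulVec A B s v ▸ hv
  have hu : u = Bᵀ *ᵥ (D *ᵥ -w - C *ᵥ u) :=
    eq_transpose_mulVec_of_mulVec_eq hDA hDB
      (by rw [mulVec_neg]; exact eq_neg_of_add_eq_zero_left hsplit)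
  have hu0 : u = 0 :=
    hu.trans <| transpose_mulVec_eq_zero_of_span_eq hspan fun j hj => by simp [← hu, u, hj]
  have hw0 : ∀ j ∈ s, v j = 0 :=
    eq_zero_of_mulVec_ite_eq_zero hindep (by simpa [hu0] using hsplit)
  refine hv0 (funext fun j => ?_)
  by_cases hj : j ∈ s
  · exact hw0 j hj
  · simpa [u, hj] using congrFun hu0 j

theorem complementary_bases (n : ℕ) (A B C D : Matrix (Fin n) (Fin n) ℂ)
    (hsymp : (fromBlocks A B C D)ᵀ * (fromBlocks 0 1 (-1) 0) * (fromBlocks A B C D) =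
      (fromBlocks (0 : Matrix (Fin n) (Fin n) ℂ) 1 (-1) 0))
    (s : Finset (Fin n)) (hcard : s.card = B.rank)
    (hindep : LinearIndependent ℂ (fun j : s => Bᵀ (j : Fin n)))
    (hspan : Submodule.span ℂ (Set.range fun j : s => Bᵀ (j : Fin n)) =
      Submodule.span ℂ (Set.range fun j : Fin n => Bᵀ j)) :
    IsUnit (Matrix.of fun i j : Fin n => if j ∈ s then B i j else A i j).det :=
  complementary_bases_general n A B C D hsymp s hindep hspan
end

section
/- Let Z be a symmetric n×n complex matrix of rank k, let j₁ < … < j_k be indices such that Ze_{j₁}, …, Ze_{j_k} form a basis of the column space of Z, and let i₁, …, i_{n−k} be the complementary indices. Then the k×k principal submatrix of Z obtained by deleting rows and columns i₁, …, i_{n−k} is invertible. -/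
/-!
By symmetry the columns `Z eⱼ` (`j ∈ s`) are also the rows of `Z` indexed by `s`, so the `s × n`
block of rows has rank `|s|` and its columns span all of `ℂˢ`. Each of those columns is the
restriction to `s` of a column of `Z`, hence a combination of the columns indexed by `s`; so the
columns of the principal `s × s` block already span `ℂˢ`, and the block is invertible.
-/

open Matrix

namespace Matrix

open Submodule Set

theorem span_range_col_eq_top_of_linearIndependent_row {K ι n : Type*} [Field K]
    [Fintype ι] [Fintype n] {A : Matrix ι n K} (h : LinearIndependent K A.row) :
    span K (range A.col) = ⊤ :=
  eq_top_of_finrank_eq <| by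
    rw [← rank_eq_finrank_span_cols, h.rank_matrix, Module.finrank_fintype_fun_eq_card]

theorem isUnit_det_of_span_range_col_eq_top {R ι : Type*} [CommRing R] [Fintype ι]
    [DecidableEq ι] {M : Matrix ι ι R} (h : span R (range M.col) = ⊤) : IsUnit M.det := by
  rw [← M.range_mulVecLin, LinearMap.range_eq_top] at h
  exact (isUnit_iff_isUnit_det M).mp (mulVec_surjective_iff_isUnit.mp h)

theorem span_range_col_submatrix_eq {R m n ι κ : Type*} [Semiring R]
    (Z : Matrix m n R) (e : ι → m) (f : κ → n)
    (hcol : span R (range (Z.col ∘ f)) = span R (range Z.col)) :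
    span R (range (Z.submatrix e f).col) = span R (range (Z.submatrix e id).col) := by
  have hcols : (Z.submatrix e f).col = LinearMap.funLeft R R e ∘ Z.col ∘ f := rfl
  have hcols' : (Z.submatrix e id).col = LinearMap.funLeft R R e ∘ Z.col := rfl
  rw [hcols, hcols', range_comp, range_comp (LinearMap.funLeft R R e), ← map_span, ← map_span,
    hcol]

theorem isUnit_det_submatrix_of_linearIndependent_row {K m n ι : Type*} [Field K]
    [Fintype n] [Fintype ι] [DecidableEq ι] (Z : Matrix m n K) (e : ι → m) (f : ι → n)
    (hrow : LinearIndependent K (Z.row ∘ e))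
    (hcol : span K (range (Z.col ∘ f)) = span K (range Z.col)) :
    IsUnit (Z.submatrix e f).det :=
  isUnit_det_of_span_range_col_eq_top <| (Z.span_range_col_submatrix_eq e f hcol).trans <|
    span_range_col_eq_top_of_linearIndependent_row (A := Z.submatrix e id) hrow

end Matrix

theorem principal_minor_invertible_general (n : ℕ) (Z : Matrix (Fin n) (Fin n) ℂ) (hZ : Zᵀ = Z)
    (s : Finset (Fin n))
    (hindep : LinearIndependent ℂ (fun j : s => Zᵀ (j : Fin n)))
    (hspan : Submodule.span ℂ (Set.range fun j : s => Zᵀ (j : Fin n)) =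
      Submodule.span ℂ (Set.range fun j : Fin n => Zᵀ j)) :
    IsUnit (Z.submatrix (fun j : s => (j : Fin n)) (fun j : s => (j : Fin n))).det := by
  refine Z.isUnit_det_submatrix_of_linearIndependent_row _ _ ?_ hspan
  rw [← hZ]
  exact hindep

theorem principal_minor_invertible (n : ℕ) (Z : Matrix (Fin n) (Fin n) ℂ) (hZ : Zᵀ = Z)
    (s : Finset (Fin n)) (hcard : s.card = Z.rank)
    (hindep : LinearIndependent ℂ (fun j : s => Zᵀ (j : Fin n)))
    (hspan : Submodule.span ℂ (Set.range fun j : s => Zᵀ (j : Fin n)) =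
      Submodule.span ℂ (Set.range fun j : Fin n => Zᵀ j)) :
    IsUnit (Z.submatrix (fun j : s => (j : Fin n)) (fun j : s => (j : Fin n))).det :=
  principal_minor_invertible_general n Z hZ s hindep hspan
end

section
/- Suppose a polynomial map P : ℂᵐ → ℂ^{m−1} has the property that there exist a constant vector v ∈ ℂ^{m−1} and constants λ_{ij} ∈ ℂ with ∂²P/∂x_i∂x_j = λ_{ij} v for all i, j. Then each first partial derivative has the form ∂P/∂x_j = c_j + f_j(x)·v for a constant vector c_j and the linear function f_j(x) = Σ_k λ_{kj} x_k, and consequently the vector field V = D_x(P) (component j = signed (m−1)-minor of the Jacobian omitting column j) is affine, i.e. V(x) = Ax + b for some constant matrix A and vector b; in particular V is ℂ-complete. -/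
/-
All second partials of `P` are constant multiples of the single vector `v`, so differentiating any
column of a Jacobian minor yields a constant multiple of `v`. Differentiating the minor twice,
column by column, gives only determinants in which one column has been differentiated twice
(a zero column) or two columns are both multiples of `v`; hence every component of `V` has
vanishing Hessian and is affine. An affine field `x ↦ A x + b` becomes linear on `ℂⁿ × ℂ` as
`(x, s) ↦ (A x + s b, 0)`; its exponential flow from `(x₀, 1)` keeps `s = 1`, and its first
component is a flow of `V` defined for all complex time.
-/

open MvPolynomial Matrix

namespace Derivation

variable {R A M : Type*} [CommRing R] [CommRing A] [Algebra R A] [AddCommGroup M] [Module A M]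
  [Module R M]

theorem leibniz_prod (D : Derivation R A M) {ι : Type*} [DecidableEq ι] (s : Finset ι)
    (f : ι → A) : D (∏ i ∈ s, f i) = ∑ i ∈ s, (∏ j ∈ s.erase i, f j) • D (f i) := by
  induction s using Finset.induction_on with
  | empty => simp
  | insert a s ha ih =>
    rw [Finset.prod_insert ha, leibniz, ih, Finset.sum_insert ha, Finset.erase_insert ha,
      Finset.smul_sum, add_comm]
    congr 1
    refine Finset.sum_congr rfl fun i hi => ?_
    rw [Finset.erase_insert_of_ne (ne_of_mem_of_not_mem hi ha).symm, Finset.prod_insert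
      (fun h => ha (Finset.mem_of_mem_erase h)), smul_smul]

theorem leibniz_det {n : Type*} [Fintype n] [DecidableEq n] (D : Derivation R A A)
    (N : Matrix n n A) : D N.det = ∑ k, (N.updateCol k fun r => D (N r k)).det := by
  simp only [det_apply', map_sum, leibniz, D.map_intCast, mul_zero, add_zero, smul_eq_mul]
  rw [Finset.sum_comm]
  refine Finset.sum_congr rfl fun σ _ => ?_
  rw [leibniz_prod, Finset.mul_sum]
  refine Finset.sum_congr rfl fun k _ => ?_
  rw [← Finset.mul_prod_erase Finset.univ _ (Finset.mem_univ k), updateCol_self,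
    Finset.prod_congr rfl fun i hi => updateCol_ne (Finset.ne_of_mem_erase hi), smul_eq_mul]
  ring

theorem apply_apply_det_eq_zero_of_col_derivs_parallel {n : Type*} [Fintype n] [DecidableEq n]
    (D D' : Derivation R A A) (N : Matrix n n A) (w a b : n → R)
    (hD' : ∀ r k, D' (N r k) = algebraMap R A (a k * w r))
    (hD : ∀ r k, D (N r k) = algebraMap R A (b k * w r)) :
    D (D' N.det) = 0 := by
  set W : n → A := fun r => algebraMap R A (w r)
  have hcol : ∀ (c : n → R) k, (fun r => algebraMap R A (c k * w r)) = algebraMap R A (c k) • W :=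
    fun c k => funext fun r => by simp [W, smul_eq_mul]
  suffices h : ∀ k, D (N.updateCol k W).det = 0 by
    simp only [leibniz_det, hD', hcol a, det_updateCol_smul, map_sum, ← Algebra.smul_def,
      map_smul, h, smul_zero, Finset.sum_const_zero]
  intro k
  rw [leibniz_det]
  refine Finset.sum_eq_zero fun k' _ => ?_
  rcases eq_or_ne k' k with rfl | hk
  · refine det_eq_zero_of_column_eq_zero k' fun r => ?_
    simp [W]
  · simp only [updateCol_ne hk, hD, hcol b, det_updateCol_smul]
    rw [det_zero_of_column_eq hk fun r => ?_, mul_zero]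
    rw [updateCol_self, updateCol_ne hk.symm, updateCol_self]

end Derivation

namespace MvPolynomial

variable {σ R : Type*} [CommRing R] [NoZeroDivisors R] [CharZero R] {f : MvPolynomial σ R}

theorem eq_C_of_pderiv_eq_zero (h : ∀ i, pderiv i f = 0) : f = C (coeff 0 f) := by
  classical
  ext d
  rw [coeff_C]
  split_ifs with hd
  · rw [hd]
  obtain ⟨i, hi⟩ : ∃ i, d i ≠ 0 := by simpa [Finsupp.ext_iff] using Ne.symm hd
  have hle : Finsupp.single i 1 ≤ d := Finsupp.single_le_iff.mpr (Nat.one_le_iff_ne_zero.mpr hi)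
  have := coeff_pderiv (i := i) f (d - Finsupp.single i 1)
  rw [h i, coeff_zero, tsub_add_cancel_of_le hle, eq_comm, mul_eq_zero] at this
  exact this.resolve_right (Nat.cast_add_one_ne_zero _)

theorem eq_affine_of_pderiv_eq_C [Fintype σ] (a : σ → R) (h : ∀ i, pderiv i f = C (a i)) :
    f = C (coeff 0 f) + ∑ i, C (a i) * X i := by
  classical
  have hlin : ∀ i, pderiv i (∑ l, C (a l) * X l) = C (a i) := fun i => by
    simp [pderiv_X, Pi.single_apply]
  have hconst := eq_C_of_pderiv_eq_zero (f := f - ∑ l, C (a l) * X l)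
    fun i => by rw [map_sub, h, hlin, sub_self]
  rw [sub_eq_iff_eq_add] at hconst
  simpa [coeff_sum, coeff_C_mul, coeff_X] using hconst

theorem exists_eq_affine_of_pderiv_pderiv_eq_zero [Fintype σ]
    (h : ∀ i j, pderiv i (pderiv j f) = 0) :
    ∃ (a : σ → R) (b : R), f = ∑ l, C (a l) * X l + C b := by
  refine ⟨fun l => coeff (Finsupp.single l 1) f, coeff 0 f, ?_⟩
  rw [add_comm]
  refine eq_affine_of_pderiv_eq_C _ fun j => ?_
  rw [eq_C_of_pderiv_eq_zero fun i => h i j, coeff_pderiv]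
  simp

end MvPolynomial

theorem exists_hasDerivAt_eq_apply_add {𝕂 E : Type*} [RCLike 𝕂] [NormedAddCommGroup E]
    [NormedSpace 𝕂 E] [CompleteSpace E] (T : E →L[𝕂] E) (b x₀ : E) :
    ∃ γ : 𝕂 → E, γ 0 = x₀ ∧ ∀ t, HasDerivAt γ (T (γ t) + b) t := by
  let S : E × 𝕂 →L[𝕂] E × 𝕂 :=
    (T.comp (.fst 𝕂 E 𝕂) + (ContinuousLinearMap.snd 𝕂 E 𝕂).smulRight b).prod 0
  let y : 𝕂 → E × 𝕂 := fun t => NormedSpace.exp (t • S) (x₀, 1)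
  have hy₀ : y 0 = (x₀, 1) := by
    simp only [y]
    rw [zero_smul 𝕂 S, NormedSpace.exp_zero, one_apply_eq_self]
  have hy : ∀ t, HasDerivAt y (S (y t)) t := fun t => by
    simpa using (hasDerivAt_exp_smul_const' (𝕂 := 𝕂) S t).clm_apply (hasDerivAt_const t (x₀, 1))
  have hfst : ∀ t, HasDerivAt (fun t => (y t).1) (S (y t)).1 t := fun t =>
    (ContinuousLinearMap.fst 𝕂 E 𝕂).hasFDerivAt.comp_hasDerivAt t (hy t)
  have hsnd : ∀ t, HasDerivAt (fun t => (y t).2) 0 t := fun t =>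
    (ContinuousLinearMap.snd 𝕂 E 𝕂).hasFDerivAt.comp_hasDerivAt t (hy t)
  have hy₂ : ∀ t, (y t).2 = 1 := fun t => by
    rw [is_const_of_deriv_eq_zero (fun t => (hsnd t).differentiableAt)
      (fun t => (hsnd t).deriv) t 0, hy₀]
  refine ⟨fun t => (y t).1, congr($hy₀.1), fun t => ?_⟩
  simpa [S, hy₂ t] using hfst t

theorem Dx_field_affine_complete (m : ℕ) (P : Fin m → MvPolynomial (Fin (m + 1)) ℂ)
    (v : Fin m → ℂ) (lam : Fin (m + 1) → Fin (m + 1) → ℂ)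
    (hP : ∀ (i j : Fin (m + 1)) (r : Fin m),
      pderiv i (pderiv j (P r)) = C (lam i j * v r)) :
    let V : Fin (m + 1) → MvPolynomial (Fin (m + 1)) ℂ := fun j =>
      (-1 : MvPolynomial (Fin (m + 1)) ℂ) ^ (j : ℕ) *
        (Matrix.of fun r : Fin m => fun k : Fin m => pderiv (j.succAbove k) (P r)).det
    (∀ j : Fin (m + 1), ∃ c : Fin m → ℂ, ∀ r : Fin m,
        pderiv j (P r) = C (c r) + (∑ k : Fin (m + 1), C (lam k j) * X k) * C (v r)) ∧
    (∃ (A : Matrix (Fin (m + 1)) (Fin (m + 1)) ℂ) (b : Fin (m + 1) → ℂ),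
        ∀ j, V j = (∑ l : Fin (m + 1), C (A j l) * X l) + C (b j)) ∧
    (∀ x₀ : Fin (m + 1) → ℂ, ∃ γ : ℂ → (Fin (m + 1) → ℂ), γ 0 = x₀ ∧
        ∀ t : ℂ, HasDerivAt γ (fun j => eval (γ t) (V j)) t) := by
  intro V
  have hP' : ∀ i j r, pderiv i (pderiv j (P r)) = algebraMap ℂ _ (lam i j * v r) := by
    simpa only [algebraMap_eq] using hP
  have hV : ∀ j, ∃ (a : Fin (m + 1) → ℂ) (b : ℂ), V j = ∑ l, C (a l) * X l + C b := by
    refine fun j => exists_eq_affine_of_pderiv_pderiv_eq_zero fun i i' => ?_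
    simp only [V]
    rw [show (-1 : MvPolynomial (Fin (m + 1)) ℂ) ^ (j : ℕ) = C ((-1) ^ (j : ℕ)) by simp,
      pderiv_C_mul, pderiv_C_mul]
    exact mul_eq_zero_of_right _ <|
      Derivation.apply_apply_det_eq_zero_of_col_derivs_parallel _ _ _ v
        (fun k => lam i' (j.succAbove k)) (fun k => lam i (j.succAbove k))
        (fun r k => hP' _ _ r) (fun r k => hP' _ _ r)
  choose A b hAb using hV
  refine ⟨fun j => ⟨fun r => coeff 0 (pderiv j (P r)), fun r => ?_⟩, ⟨A, b, hAb⟩, fun x₀ => ?_⟩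
  · rw [eq_affine_of_pderiv_eq_C _ fun i => hP i j r, Finset.sum_mul]
    simp only [map_mul, mul_right_comm]
  · set T := (Matrix.mulVecLin A).toContinuousLinearMap
    obtain ⟨γ, hγ₀, hγ⟩ := exists_hasDerivAt_eq_apply_add T b x₀
    refine ⟨γ, hγ₀, fun t => ?_⟩
    have heval : (fun j => eval (γ t) (V j)) = T (γ t) + b := by
      ext j
      simp only [hAb, map_add, map_sum, map_mul, eval_C, eval_X, Pi.add_apply]
      rfl
    exact heval ▸ hγ t
end

section
/- With Φ_K(Z₁, …, Z_K) = M_K(Z_K) ⋯ M₁(Z₁) e₂ₙ as above, Φ_K never takes the value 0, and for K ≥ 3 the map Φ_K is surjective onto ℂ²ⁿ \ {0}; moreover every value is attained at a point with Z₁eₙ ≠ 0. -/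
open Matrix

/-- The elementary symplectic matrix mapping: upper triangular for odd `k`,
lower triangular for even `k`. -/
noncomputable def Mk (n : ℕ) (k : ℕ) (Z : Matrix (Fin n) (Fin n) ℂ) :
    Matrix (Fin n ⊕ Fin n) (Fin n ⊕ Fin n) ℂ :=
  if k % 2 = 1 then fromBlocks 1 Z 0 1 else fromBlocks 1 0 Z 1

/-- `Φ_K(Z₁, …, Z_K) = M_K(Z_K) ⋯ M₁(Z₁) e₂ₙ` (the `Z i` for `i > K` are ignored). -/
noncomputable def Phi (n : ℕ) : ℕ → (ℕ → Matrix (Fin (n + 1)) (Fin (n + 1)) ℂ) → (Fin (n + 1) ⊕ Fin (n + 1) → ℂ)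
  | 0, _ => Sum.elim 0 (Pi.single (Fin.last n) 1)
  | k + 1, Z => (Mk (n + 1) (k + 1) (Z (k + 1))).mulVec (Phi n k Z)


/-! Each `M_k(Z)` is unipotent with inverse `M_k(-Z)`, so `Φ_K` never vanishes.
For surjectivity take `Z_i = 0` for `i > 3`, so that `Φ_K = Φ₃ = (Z₁e + Z₃(Z₂Z₁e + e), Z₂Z₁e + e)`.
Each `Z_i` then only has to send one prescribed vector to another, and a symmetric matrix can
send any nonzero `u` to any `v`: with `w ⬝ᵥ u = 1`, take `v wᵀ + w vᵀ - (v ⬝ᵥ u) w wᵀ`. -/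

theorem exists_transpose_eq_self_mulVec_eq_of_dotProduct_eq_one {ι R : Type*} [Fintype ι]
    [CommRing R] {u v w : ι → R} (hw : w ⬝ᵥ u = 1) :
    ∃ Z : Matrix ι ι R, Zᵀ = Z ∧ Z *ᵥ u = v := by
  refine ⟨vecMulVec v w + vecMulVec w v - (v ⬝ᵥ u) • vecMulVec w w, ?_, ?_⟩
  · simp only [transpose_sub, transpose_add, transpose_smul, transpose_vecMulVec]
    abel
  · simp only [sub_mulVec, add_mulVec, smul_mulVec, vecMulVec_mulVec, op_smul_eq_smul, hw,
      one_smul, dotProduct_comm v u]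
    abel

theorem exists_transpose_eq_self_mulVec_eq {ι K : Type*} [Fintype ι] [DecidableEq ι] [Field K]
    {u v : ι → K} (h : u = 0 → v = 0) : ∃ Z : Matrix ι ι K, Zᵀ = Z ∧ Z *ᵥ u = v := by
  by_cases hu : u = 0
  · exact ⟨0, transpose_zero, by simp [hu, h hu]⟩
  obtain ⟨i, hi⟩ := Function.ne_iff.mp hu
  refine exists_transpose_eq_self_mulVec_eq_of_dotProduct_eq_one (w := Pi.single i (u i)⁻¹) ?_
  rw [single_dotProduct, inv_mul_cancel₀ hi]

/-- `Z₁e` is taken to be `e` if `b ≠ 0`, and `a` if `b = 0`. -/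
theorem exists_transpose_eq_self_solving_phi_three {ι K : Type*} [Fintype ι] [DecidableEq ι]
    [Field K] {e a b : ι → K} (he : e ≠ 0) (hab : a ≠ 0 ∨ b ≠ 0) :
    ∃ Z₁ Z₂ Z₃ : Matrix ι ι K, Z₁ᵀ = Z₁ ∧ Z₂ᵀ = Z₂ ∧ Z₃ᵀ = Z₃ ∧ Z₁ *ᵥ e ≠ 0 ∧
      Z₁ *ᵥ e + Z₃ *ᵥ (Z₂ *ᵥ (Z₁ *ᵥ e) + e) = a ∧ Z₂ *ᵥ (Z₁ *ᵥ e) + e = b := by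
  obtain ⟨c, hc0, hca⟩ : ∃ c, c ≠ 0 ∧ (b = 0 → c = a) := by
    by_cases hb : b = 0
    exacts [⟨a, by tauto, fun _ ↦ rfl⟩, ⟨e, he, fun h ↦ absurd h hb⟩]
  obtain ⟨Z₁, hZ₁, h₁⟩ := exists_transpose_eq_self_mulVec_eq (u := e) (v := c) (by tauto)
  obtain ⟨Z₂, hZ₂, h₂⟩ := exists_transpose_eq_self_mulVec_eq (u := c) (v := b - e) (by tauto)
  obtain ⟨Z₃, hZ₃, h₃⟩ := exists_transpose_eq_self_mulVec_eq (u := b) (v := a - c)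
    (fun hb ↦ by rw [hca hb, sub_self])
  refine ⟨Z₁, Z₂, Z₃, hZ₁, hZ₂, hZ₃, h₁ ▸ hc0, ?_, ?_⟩
  · rw [h₁, h₂, sub_add_cancel, h₃, add_sub_cancel]
  · rw [h₁, h₂, sub_add_cancel]

section Mk

variable {m k : ℕ}

theorem Mk_mulVec_sumElim_of_odd (hk : Odd k) (Z : Matrix (Fin m) (Fin m) ℂ) (a b : Fin m → ℂ) :
    Mk m k Z *ᵥ Sum.elim a b = Sum.elim (a + Z *ᵥ b) b := by
  simp [Mk, Nat.odd_iff.mp hk, fromBlocks_mulVec]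

theorem Mk_mulVec_sumElim_of_even (hk : Even k) (Z : Matrix (Fin m) (Fin m) ℂ) (a b : Fin m → ℂ) :
    Mk m k Z *ᵥ Sum.elim a b = Sum.elim a (Z *ᵥ a + b) := by
  simp [Mk, Nat.even_iff.mp hk, fromBlocks_mulVec]

theorem Mk_neg_mul_self (Z : Matrix (Fin m) (Fin m) ℂ) : Mk m k (-Z) * Mk m k Z = 1 := by
  unfold Mk
  split <;> simp [fromBlocks_multiply, ← fromBlocks_one]

theorem Mk_zero : Mk m k 0 = 1 := by
  unfold Mk
  split <;> simp [← fromBlocks_one]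

end Mk

namespace Phi

variable {n : ℕ} (Z : ℕ → Matrix (Fin (n + 1)) (Fin (n + 1)) ℂ)

theorem ne_zero (K : ℕ) : Phi n K Z ≠ 0 := by
  induction K with
  | zero =>
    intro h
    simpa [Phi] using congrFun h (Sum.inr (Fin.last n))
  | succ k ih =>
    intro h
    apply ih
    have := congrArg (Mk (n + 1) (k + 1) (-Z (k + 1)) *ᵥ ·) h
    simpa [Phi, mulVec_mulVec, Mk_neg_mul_self] using this

theorem three : Phi n 3 Z = Sum.elim
    (Z 1 *ᵥ Pi.single (Fin.last n) 1 +
      Z 3 *ᵥ (Z 2 *ᵥ (Z 1 *ᵥ Pi.single (Fin.last n) 1) + Pi.single (Fin.last n) 1))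
    (Z 2 *ᵥ (Z 1 *ᵥ Pi.single (Fin.last n) 1) + Pi.single (Fin.last n) 1) := by
  simp only [Phi, Mk_mulVec_sumElim_of_odd (by decide : Odd 1),
    Mk_mulVec_sumElim_of_even (by decide : Even 2), Mk_mulVec_sumElim_of_odd (by decide : Odd 3),
    zero_add]

theorem eq_three_of_forall_eq_zero (hZ : ∀ i, 4 ≤ i → Z i = 0) {K : ℕ} (hK : 3 ≤ K) :
    Phi n K Z = Phi n 3 Z := by
  induction K, hK using Nat.le_induction with
  | base => rfl
  | succ k hk ih => rw [Phi, hZ (k + 1) (by omega), Mk_zero, one_mulVec, ih]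

end Phi

theorem phi_ne_zero_and_surjective (n : ℕ) :
    (∀ (K : ℕ) (Z : ℕ → Matrix (Fin (n + 1)) (Fin (n + 1)) ℂ),
      (∀ i, (Z i)ᵀ = Z i) → Phi n K Z ≠ 0) ∧
    (∀ K : ℕ, 3 ≤ K → ∀ y : Fin (n + 1) ⊕ Fin (n + 1) → ℂ, y ≠ 0 →
      ∃ Z : ℕ → Matrix (Fin (n + 1)) (Fin (n + 1)) ℂ,
        (∀ i, (Z i)ᵀ = Z i) ∧ Phi n K Z = y ∧
        (Z 1).mulVec (Pi.single (Fin.last n) 1) ≠ 0) := by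
  refine ⟨fun K Z _ ↦ Phi.ne_zero Z K, fun K hK y hy ↦ ?_⟩
  have hab : y ∘ Sum.inl ≠ 0 ∨ y ∘ Sum.inr ≠ 0 := by
    by_contra! h
    exact hy (by rw [← Sum.elim_comp_inl_inr y, h.1, h.2, Sum.elim_zero_zero])
  obtain ⟨Z₁, Z₂, Z₃, hZ₁, hZ₂, hZ₃, he, ha, hb⟩ :=
    exists_transpose_eq_self_solving_phi_three (Pi.single_ne_zero_iff.mpr one_ne_zero) hab
  let Z : ℕ → Matrix (Fin (n + 1)) (Fin (n + 1)) ℂ :=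
    fun i ↦ if i = 1 then Z₁ else if i = 2 then Z₂ else if i = 3 then Z₃ else 0
  refine ⟨Z, fun i ↦ ?_, ?_, he⟩
  · dsimp only [Z]
    split_ifs <;> simp [*]
  · have hZ : ∀ i, 4 ≤ i → Z i = 0 := fun i hi ↦ by
      simp only [Z]
      rw [if_neg, if_neg, if_neg] <;> omega
    rw [Phi.eq_three_of_forall_eq_zero Z hZ hK, Phi.three]
    simp only [Z, if_true, Nat.reduceEqDiff, if_false]
    rw [ha, hb, Sum.elim_comp_inl_inr]
end
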